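/- Let β ∈ F^{r−1} be a row vector. Then for every integer n ≥ 1 there exists a constant c_n > 0 such that for every ω' ∈ Ω^{r−1}_n one has |e_{Λ'ω'}(βω')| < c_n, and for every ω₁ ∈ C_∞ with d(ω₁, F_∞^{r−1}ω') ≥ c_n one has |e_{Λ'ω'}(ω₁)| ≥ c_n > |e_{Λ'ω'}(βω')|, hence |e_{Λ'ω'}(βω')·u_{ω'}(ω₁)| < 1. -/

import Mathlib

/-!
For `ω' ∈ Ω^{r-1}_n` the bound `h(ω') ≥ q^{-n}` gives `|ω'| ≤ q^n |ξ|` and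
`|λ'ω'| ≥ q^{-n} |ξ| |λ'|` for every `λ' ∈ Λ'`. Since `Λ'` is commensurable with `A^{r-1}` and
balls in `A = 𝔽_q[t]` are finite, `Λ'` is discrete, so `H = Λ'ω'` is strongly discrete, and its
minimal norm and the number of its points in a ball are bounded independently of `ω'`. Every
factor of `|e_H(z)| = |z| ∏_{0 < |h| ≤ |z|} |1 - z/h|` is then bounded, which bounds
`|e_H(βω')|` uniformly. Conversely, if `h₀` is the point of `H` nearest to `z` in the ball of
radius `|z|`, translation by `h₀` permutes that ball, and the ultrametric inequality gives
`|e_H(z)| ≥ |z - h₀| ≥ d(z, F_∞^{r-1}ω')`.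
-/

noncomputable section

namespace Paper

/-- The sup-norm `|ω| = max_i |ω_i|` of a vector. -/
noncomputable def supNorm {K : Type*} [NormedField K] {m : ℕ} (ω : Fin m → K) : ℝ :=
  ⨆ i, ‖ω i‖

/-- A linear form with coefficients `ℓ i` in `F_∞` is unimodular if its largest
coefficient has absolute value `1`. -/
def Unimodular {K : Type*} [NormedField K] (Finf : Subfield K) {m : ℕ} (ℓ : Fin m → K) : Prop :=
  (∀ i, ℓ i ∈ Finf) ∧ supNorm ℓ = 1

/-- `h(ω) = |ω|⁻¹ · inf {|ℓ(ω)| : ℓ a unimodular F_∞-linear form}`. -/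
noncomputable def hOm {K : Type*} [NormedField K] (Finf : Subfield K) {m : ℕ}
    (ω : Fin m → K) : ℝ :=
  (supNorm ω)⁻¹ *
    sInf {x : ℝ | ∃ ℓ : Fin m → K, Unimodular Finf ℓ ∧ x = ‖∑ i, ℓ i * ω i‖}

/-- The Drinfeld period domain `Ω^{m+1}`: vectors with `F_∞`-linearly independent entries
and last entry `ξ`. -/
def Omega {K : Type*} [NormedField K] (Finf : Subfield K) (ξ : K) (m : ℕ) :
    Set (Fin (m + 1) → K) :=
  {ω | (∀ c : Fin (m + 1) → K, (∀ i, c i ∈ Finf) → ∑ i, c i * ω i = 0 → ∀ i, c i = 0) ∧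
    ω (Fin.last m) = ξ}

/-- `Ω^{m+1}_n = {ω ∈ Ω^{m+1} : h(ω) ≥ |π|^n}` where `|π| = q⁻¹`. -/
def OmegaN {K : Type*} [NormedField K] (Finf : Subfield K) (ξ : K) (q : ℕ) (m n : ℕ) :
    Set (Fin (m + 1) → K) :=
  {ω | ω ∈ Omega Finf ξ m ∧ ((q : ℝ))⁻¹ ^ n ≤ hOm Finf ω}

/-- The automorphy factor `j(γ,ω) = ξ⁻¹·(last entry of γω)`. -/
noncomputable def jmap {K : Type*} [NormedField K] (ξ : K) {m : ℕ}
    (γ : Matrix (Fin (m + 1)) (Fin (m + 1)) K) (ω : Fin (m + 1) → K) : K :=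
  ξ⁻¹ * (γ.mulVec ω) (Fin.last m)

/-- The action `γ(ω) = j(γ,ω)⁻¹·γω` of `GL_{m+1}(F_∞)` on `Ω^{m+1}`. -/
noncomputable def gact {K : Type*} [NormedField K] (ξ : K) {m : ℕ}
    (γ : Matrix (Fin (m + 1)) (Fin (m + 1)) K) (ω : Fin (m + 1) → K) : Fin (m + 1) → K :=
  fun i => (jmap ξ γ ω)⁻¹ * (γ.mulVec ω) i

/-- A subgroup `H` of `(K,+)` is strongly discrete if its intersection with every ball of
finite radius is finite. -/
def StronglyDiscrete {K : Type*} [NormedField K] (H : AddSubgroup K) : Prop :=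
  ∀ ρ : ℝ, 0 < ρ → {z : K | z ∈ H ∧ ‖z‖ ≤ ρ}.Finite

/-- The exponential function `e_H(z) = z·∏_{h ∈ H∖{0}} (1 − z/h)` associated to a strongly
discrete subgroup `H ⊂ K`. -/
noncomputable def eH {K : Type*} [NormedField K] (H : AddSubgroup K) (z : K) : K :=
  z * ∏' h : {x : K // x ∈ H ∧ x ≠ 0}, (1 - z / h.1)

/-- The additive homomorphism `λ' ↦ λ'ω' = ∑ i, λ'_i ω'_i` (matrix product of a row vector
with a column vector).  `Λ'ω'` is its image `Λ'.map (pairHom ω')`. -/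
def pairHom {K : Type*} [NormedField K] {m : ℕ} (ω' : Fin m → K) : (Fin m → K) →+ K where
  toFun lam := ∑ i, lam i * ω' i
  map_zero' := by simp
  map_add' x y := by simp [add_mul, Finset.sum_add_distrib]

/-- `F_∞^{m}ω' = {xω' : x ∈ F_∞^m} ⊂ K`. -/
def Fspan {K : Type*} [NormedField K] (Finf : Subfield K) {m : ℕ} (ω' : Fin m → K) : Set K :=
  {z | ∃ c : Fin m → K, (∀ i, c i ∈ Finf) ∧ z = ∑ i, c i * ω' i}

/-- `A^m ⊂ K^m`, the additive group of vectors with entries in `A`. -/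
def Avec {K : Type*} [NormedField K] (A : Subring K) (m : ℕ) : AddSubgroup (Fin m → K) where
  carrier := {v | ∀ i, v i ∈ A}
  zero_mem' := by intro i; exact A.zero_mem
  add_mem' := by intro a b ha hb i; exact A.add_mem (ha i) (hb i)
  neg_mem' := by intro a ha i; exact A.neg_mem (ha i)

open Polynomial

section Arithmetic

theorem norm_eq_one_of_pow_eq_self {K : Type*} [NormedDivisionRing K] {q : ℕ} (hq : 1 < q)
    {x : K} (hx : x ^ q = x) (hx0 : x ≠ 0) : ‖x‖ = 1 := by
  have h : ‖x‖ ^ (q - 1) * ‖x‖ = 1 * ‖x‖ := by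
    rw [← pow_succ, Nat.sub_add_cancel hq.le, ← norm_pow, hx, one_mul]
  exact (pow_eq_one_iff_of_nonneg (norm_nonneg x) (by omega)).mp
    (mul_right_cancel₀ (norm_ne_zero_iff.mpr hx0) h)

theorem finite_setOf_pow_eq_self {K : Type*} [Field K] {q : ℕ} (hq : 1 < q) :
    {x : K | x ^ q = x}.Finite := by
  refine (finite_setOfPred_isRoot (FiniteField.X_pow_card_sub_X_ne_zero K hq)).subset fun x hx => ?_
  simp_all [sub_eq_zero]

theorem exists_aeval_eq_of_mem_closure {K : Type*} [Field K] {Fq : Subfield K} {t b : K}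
    (hb : b ∈ Subring.closure ((Fq : Set K) ∪ {t})) : ∃ P : Fq[X], aeval t P = b := by
  have hclosure := Algebra.adjoin_eq_ring_closure (R := Fq) ({t} : Set K)
  rw [Algebra.adjoin_singleton_eq_range_aeval,
    show Set.range (algebraMap Fq K) = Fq from Subtype.range_coe] at hclosure
  exact (SetLike.ext_iff.mp hclosure b).mpr hb

variable {K : Type*} [NormedField K] [IsUltrametricDist K]

theorem norm_eval₂_eq_pow_natDegree {R : Type*} [Semiring R] (f : R →+* K)
    (hf : ∀ c, c ≠ 0 → ‖f c‖ = 1) {t : K} (ht : 1 < ‖t‖) {P : R[X]} (hP : P ≠ 0) :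
    ‖P.eval₂ f t‖ = ‖t‖ ^ P.natDegree := by
  have hlead : ‖f P.leadingCoeff * t ^ P.natDegree‖ = ‖t‖ ^ P.natDegree := by
    rw [norm_mul, norm_pow, hf _ (leadingCoeff_ne_zero.mpr hP), one_mul]
  have hterm : ∀ i, ‖f (P.coeff i) * t ^ i‖ ≤ ‖t‖ ^ i := fun i => by
    rw [norm_mul, norm_pow]
    by_cases hc : P.coeff i = 0
    · simp [hc]
    · rw [hf _ hc, one_mul]
  have hlower : ‖∑ i ∈ Finset.range P.natDegree, f (P.coeff i) * t ^ i‖ < ‖t‖ ^ P.natDegree := by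
    obtain ⟨i, hi, hle⟩ := IsUltrametricDist.exists_norm_finsetSum_le
      (Finset.range P.natDegree) (fun i => f (P.coeff i) * t ^ i)
    rcases (Finset.range P.natDegree).eq_empty_or_nonempty with h | h
    · simpa [h] using pow_pos (one_pos.trans ht) _
    · exact hle.trans_lt ((hterm i).trans_lt
        (pow_lt_pow_right₀ ht (Finset.mem_range.mp (hi h))))
  rw [eval₂_eq_sum_range, Finset.sum_range_succ, ← hlead,
    IsUltrametricDist.norm_add_eq_max_of_norm_ne_norm (hlead ▸ hlower.ne),
    max_eq_right (hlead ▸ hlower.le), ← coeff_natDegree]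

theorem finite_setOf_mem_closure_norm_le {q : ℕ} (hq : 1 < q) {Fq : Subfield K}
    (hFq : (Fq : Set K) = {x | x ^ q = x}) {t : K} (ht : 1 < ‖t‖) (M : ℝ) :
    {b | b ∈ Subring.closure ((Fq : Set K) ∪ {t}) ∧ ‖b‖ ≤ M}.Finite := by
  have hnorm : ∀ c : Fq, c ≠ 0 → ‖algebraMap Fq K c‖ = 1 := fun c hc =>
    norm_eq_one_of_pow_eq_self hq (hFq.subset c.2) ((_root_.map_ne_zero _).mpr hc)
  have : Finite Fq := (hFq ▸ finite_setOf_pow_eq_self hq : (Fq : Set K).Finite).to_subtype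
  obtain ⟨D, hD⟩ := pow_unbounded_of_one_lt M ht
  have : Finite (degreeLT Fq D) := Finite.of_equiv _ (degreeLTEquiv Fq D).toEquiv.symm
  refine ((degreeLT Fq D : Set Fq[X]).toFinite.image (aeval t)).subset ?_
  rintro b ⟨hb, hbM⟩
  obtain ⟨P, rfl⟩ := exists_aeval_eq_of_mem_closure hb
  refine ⟨P, mem_degreeLT.mpr ?_, rfl⟩
  rcases eq_or_ne P 0 with rfl | hP
  · simp
  · rw [← natDegree_lt_iff_degree_lt hP, ← pow_lt_pow_iff_right₀ ht,
      ← norm_eval₂_eq_pow_natDegree _ hnorm ht hP, ← aeval_def]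
    exact hbM.trans_lt hD

end Arithmetic

theorem finite_setOf_mem_Avec_norm_le {K : Type*} [NormedField K] {A : Subring K} {m : ℕ}
    (hA : ∀ M : ℝ, {b | b ∈ A ∧ ‖b‖ ≤ M}.Finite) (M : ℝ) :
    {v | v ∈ Avec A m ∧ ‖v‖ ≤ M}.Finite :=
  (Set.Finite.pi' fun _ => hA M).subset fun v hv i => ⟨hv.1 i, (norm_le_pi_norm v i).trans hv.2⟩

theorem exists_pos_le_norm_of_finite {E : Type*} [NormedAddCommGroup E] {S : Set E}
    (hS : {v | v ∈ S ∧ ‖v‖ ≤ 1}.Finite) : ∃ m > 0, ∀ v ∈ S, v ≠ 0 → m ≤ ‖v‖ := by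
  obtain ⟨ε, hε, hball⟩ := Metric.isOpen_iff.mp
    (hS.sdiff (t := {0})).isClosed.isOpen_compl 0 fun h => h.2 rfl
  refine ⟨min 1 ε, by positivity, fun v hv hv0 => not_lt.mp fun hlt => ?_⟩
  exact hball (mem_ball_zero_iff.mpr (hlt.trans_le (min_le_right _ _)))
    ⟨⟨hv, hlt.le.trans (min_le_left _ _)⟩, hv0⟩

section Lattices

variable {E K : Type*} [SeminormedAddCommGroup E] [NormedField K] {Λ : AddSubgroup E}
  {φ : E →+ K} {a : ℝ}

theorem finite_setOf_mem_norm_le_of_relIndex_ne_zero {B : AddSubgroup E}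
    (hB : ∀ M : ℝ, {v | v ∈ B ∧ ‖v‖ ≤ M}.Finite) (hidx : (Λ ⊓ B).relIndex Λ ≠ 0) (M : ℝ) :
    {v | v ∈ Λ ∧ ‖v‖ ≤ M}.Finite := by
  set N := (Λ ⊓ B).addSubgroupOf Λ
  have : Finite (Λ ⧸ N) := AddSubgroup.index_ne_zero_iff_finite.mp hidx
  refine (Set.finite_iUnion fun c : Λ ⧸ N =>
    (hB (M + ‖(c.out : E)‖)).image ((c.out : E) + ·)).subset ?_
  rintro v ⟨hv, hvM⟩
  set c : Λ ⧸ N := QuotientAddGroup.mk ⟨v, hv⟩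
  have hN : -c.out + ⟨v, hv⟩ ∈ N := QuotientAddGroup.eq.mp c.out_eq'
  refine Set.mem_iUnion.mpr ⟨c, -(c.out : E) + v,
    ⟨(AddSubgroup.mem_inf.mp (AddSubgroup.mem_addSubgroupOf.mp hN)).2, ?_⟩, by simp⟩
  calc ‖-(c.out : E) + v‖ ≤ ‖(c.out : E)‖ + ‖v‖ := by simpa using norm_add_le (-(c.out : E)) v
    _ ≤ M + ‖(c.out : E)‖ := by linarith

theorem map_ball_subset_image (ha : 0 < a) (hφ : ∀ v ∈ Λ, a * ‖v‖ ≤ ‖φ v‖) (R : ℝ) :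
    {x | x ∈ Λ.map φ ∧ ‖x‖ ≤ R} ⊆ φ '' {v | v ∈ Λ ∧ ‖v‖ ≤ R / a} := by
  rintro _ ⟨⟨v, hv, rfl⟩, hR⟩
  exact ⟨v, ⟨hv, (le_div_iff₀' ha).mpr ((hφ v hv).trans hR)⟩, rfl⟩

theorem stronglyDiscrete_map (hΛ : ∀ M : ℝ, {v | v ∈ Λ ∧ ‖v‖ ≤ M}.Finite) (ha : 0 < a)
    (hφ : ∀ v ∈ Λ, a * ‖v‖ ≤ ‖φ v‖) : StronglyDiscrete (Λ.map φ) :=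
  fun R _ => ((hΛ _).image φ).subset (map_ball_subset_image ha hφ R)

theorem ncard_map_ball_le (hΛ : ∀ M : ℝ, {v | v ∈ Λ ∧ ‖v‖ ≤ M}.Finite) (ha : 0 < a)
    (hφ : ∀ v ∈ Λ, a * ‖v‖ ≤ ‖φ v‖) (R : ℝ) :
    {x | x ∈ Λ.map φ ∧ ‖x‖ ≤ R}.ncard ≤ {v | v ∈ Λ ∧ ‖v‖ ≤ R / a}.ncard :=
  (Set.ncard_le_ncard (map_ball_subset_image ha hφ R) ((hΛ _).image φ)).trans
    (Set.ncard_image_le (hΛ _))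

theorem mul_le_norm_of_mem_map (ha : 0 ≤ a) (hφ : ∀ v ∈ Λ, a * ‖v‖ ≤ ‖φ v‖) {m : ℝ}
    (hm : ∀ v ∈ Λ, v ≠ 0 → m ≤ ‖v‖) : ∀ x ∈ Λ.map φ, x ≠ 0 → a * m ≤ ‖x‖ := by
  rintro _ ⟨v, hv, rfl⟩ hx
  have hv0 : v ≠ 0 := by rintro rfl; exact hx (map_zero φ)
  exact (mul_le_mul_of_nonneg_left (hm v hv hv0) ha).trans (hφ v hv)

end Lattices

theorem prod_erase_comp_sub_eq {G M : Type*} [AddCommGroup G] [DecidableEq G] [CommMonoid M]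
    {B : Finset G} {h₀ : G} (hsub : ∀ x ∈ B, x - h₀ ∈ B) (hadd : ∀ x ∈ B, x + h₀ ∈ B)
    (f : G → M) : ∏ x ∈ B.erase h₀, f (x - h₀) = ∏ x ∈ B.erase 0, f x := by
  refine Finset.prod_nbij' (· - h₀) (· + h₀) (fun x hx => ?_) (fun x hx => ?_)
    (fun x _ => by simp) (fun x _ => by simp) (fun x _ => rfl)
  · obtain ⟨hx0, hxB⟩ := Finset.mem_erase.mp hx
    exact Finset.mem_erase.mpr ⟨sub_ne_zero.mpr hx0, hsub x hxB⟩
  · obtain ⟨hx0, hxB⟩ := Finset.mem_erase.mp hx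
    exact Finset.mem_erase.mpr ⟨by simpa using hx0, hadd x hxB⟩

section Exponential

variable {K : Type*} [NormedField K] {H : AddSubgroup K}

theorem StronglyDiscrete.finite_ball (hH : StronglyDiscrete H) (R : ℝ) :
    {x | x ∈ H ∧ ‖x‖ ≤ R}.Finite :=
  (hH (max R 1) (by positivity)).subset fun _ hx => ⟨hx.1, hx.2.trans (le_max_left _ _)⟩

variable [IsUltrametricDist K]

theorem norm_one_sub_eq_one {u : K} (hu : ‖u‖ < 1) : ‖1 - u‖ = 1 := by
  rw [sub_eq_add_neg, IsUltrametricDist.norm_add_eq_max_of_norm_ne_norm (by simpa using hu.ne')]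
  simp [hu.le]

theorem norm_sub_le_max (a b : K) : ‖a - b‖ ≤ max ‖a‖ ‖b‖ := by
  simpa [sub_eq_add_neg] using IsUltrametricDist.norm_add_le_max a (-b)

open Classical in
theorem StronglyDiscrete.norm_eH_eq_or (hH : StronglyDiscrete H) (z : K) :
    ∃ B : Finset K, (∀ x, x ∈ B ↔ x ∈ H ∧ ‖x‖ ≤ ‖z‖) ∧
      (‖eH H z‖ = ‖z‖ ∨ ‖eH H z‖ = ‖z‖ * ∏ x ∈ B.erase 0, ‖1 - z / x‖) := by
  set B := (hH.finite_ball ‖z‖).toFinset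
  have hB : ∀ x, x ∈ B ↔ x ∈ H ∧ ‖x‖ ≤ ‖z‖ := fun x => Set.Finite.mem_toFinset _
  refine ⟨B, hB, ?_⟩
  set p : K → Prop := fun x => x ∈ H ∧ x ≠ 0
  by_cases hm : Multipliable fun h : Subtype p => 1 - z / h.1
  swap
  -- `∏'` of a non-multipliable family is `1`, so then `eH H z = z`
  · exact Or.inl (by rw [eH, tprod_eq_one_of_not_multipliable hm, mul_one])
  have hfin : HasProd (fun h : Subtype p => ‖1 - z / h.1‖) (∏ h ∈ B.subtype p, ‖1 - z / h.1‖) :=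
    hasProd_prod_of_ne_finset_one fun h hh => by
      refine norm_one_sub_eq_one ?_
      rw [norm_div, div_lt_one (norm_pos_iff.mpr h.2.2)]
      exact lt_of_not_ge fun hle => hh (Finset.mem_subtype.mpr ((hB _).mpr ⟨h.2.1, hle⟩))
  have hfilter : B.filter p = B.erase 0 := by
    ext x
    simp only [Finset.mem_filter, Finset.mem_erase, hB, p]
    tauto
  right
  rw [eH, norm_mul, hm.hasProd.norm.unique hfin,
    Finset.prod_subtype_eq_prod_filter (fun x => ‖1 - z / x‖), hfilter]

theorem StronglyDiscrete.exists_norm_sub_le_norm_eH (hH : StronglyDiscrete H) (z : K) :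
    ∃ h ∈ H, ‖z - h‖ ≤ ‖eH H z‖ := by
  classical
  obtain ⟨B, hB, hjunk | hprod⟩ := hH.norm_eH_eq_or z
  · exact ⟨0, zero_mem H, by rw [sub_zero, hjunk]⟩
  have h0B : 0 ∈ B := (hB 0).mpr ⟨zero_mem H, by simp⟩
  obtain ⟨h₀, hh₀B, hmin⟩ := B.exists_min_image (fun x => ‖z - x‖) ⟨0, h0B⟩
  obtain ⟨hh₀H, hh₀z⟩ := (hB h₀).mp hh₀B
  refine ⟨h₀, hh₀H, ?_⟩
  have hsub : ∀ x ∈ B, x - h₀ ∈ B := fun x hx => (hB _).mpr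
    ⟨sub_mem ((hB x).mp hx).1 hh₀H, (norm_sub_le_max x h₀).trans (max_le ((hB x).mp hx).2 hh₀z)⟩
  have hadd : ∀ x ∈ B, x + h₀ ∈ B := fun x hx => (hB _).mpr
    ⟨add_mem ((hB x).mp hx).1 hh₀H,
      (IsUltrametricDist.norm_add_le_max x h₀).trans (max_le ((hB x).mp hx).2 hh₀z)⟩
  have hprod_eq : ‖eH H z‖ * ∏ x ∈ B.erase 0, ‖x‖ = ∏ x ∈ B, ‖z - x‖ := by
    rw [hprod, mul_assoc, ← Finset.prod_mul_distrib, ← Finset.mul_prod_erase B _ h0B, sub_zero]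
    refine congrArg _ (Finset.prod_congr rfl fun x hx => ?_)
    rw [← norm_mul, one_sub_div (Finset.ne_of_mem_erase hx), div_mul_cancel₀ _
      (Finset.ne_of_mem_erase hx), norm_sub_rev]
  have hle : ‖z - h₀‖ * ∏ x ∈ B.erase 0, ‖x‖ ≤ ∏ x ∈ B, ‖z - x‖ := by
    rw [← prod_erase_comp_sub_eq hsub hadd (‖·‖), ← Finset.mul_prod_erase B _ hh₀B]
    gcongr with x hx
    calc ‖x - h₀‖ = ‖(z - h₀) - (z - x)‖ := by rw [sub_sub_sub_cancel_left]
      _ ≤ ‖z - x‖ := (norm_sub_le_max _ _).trans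
          (max_le (hmin x (Finset.mem_of_mem_erase hx)) le_rfl)
  exact le_of_mul_le_mul_right (hprod_eq ▸ hle)
    (Finset.prod_pos fun x hx => norm_pos_iff.mpr (Finset.ne_of_mem_erase hx))

theorem StronglyDiscrete.le_norm_eH_of_le_infDist (hH : StronglyDiscrete H) {S : Set K}
    (hHS : (H : Set K) ⊆ S) {c : ℝ} {z : K} (hc : c ≤ Metric.infDist z S) : c ≤ ‖eH H z‖ := by
  obtain ⟨h, hh, hle⟩ := hH.exists_norm_sub_le_norm_eH z
  exact hc.trans ((Metric.infDist_le_dist_of_mem (hHS hh)).trans (dist_eq_norm z h ▸ hle))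

theorem StronglyDiscrete.norm_eH_le (hH : StronglyDiscrete H) {δ : ℝ} (hδ : 0 < δ)
    (hδH : ∀ x ∈ H, x ≠ 0 → δ ≤ ‖x‖) {z : K} {R : ℝ} (hzR : ‖z‖ ≤ R) {N : ℕ}
    (hN : {x | x ∈ H ∧ ‖x‖ ≤ R}.ncard ≤ N) : ‖eH H z‖ ≤ R * max 1 (R / δ) ^ N := by
  classical
  have hR : 0 ≤ R := (norm_nonneg z).trans hzR
  have hpow : 1 ≤ max 1 (R / δ) ^ N := one_le_pow₀ (le_max_left _ _)
  obtain ⟨B, hB, hjunk | hprod⟩ := hH.norm_eH_eq_or z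
  · rw [hjunk]
    exact hzR.trans (le_mul_of_one_le_right hR hpow)
  have hcard : (B.erase 0).card ≤ N := by
    have hBset : (B : Set K) = {x | x ∈ H ∧ ‖x‖ ≤ ‖z‖} := Set.ext hB
    refine Finset.card_erase_le.trans (le_trans ?_ hN)
    rw [← Set.ncard_coe_finset, hBset]
    exact Set.ncard_le_ncard (fun x hx => ⟨hx.1, hx.2.trans hzR⟩) (hH.finite_ball R)
  have hfactor : ∀ x ∈ B.erase 0, ‖1 - z / x‖ ≤ max 1 (R / δ) := fun x hx => by
    have hxH := ((hB x).mp (Finset.mem_of_mem_erase hx)).1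
    refine (norm_sub_le_max _ _).trans (max_le_max (norm_one.le) ?_)
    rw [norm_div]
    exact div_le_div₀ hR hzR hδ (hδH x hxH (Finset.ne_of_mem_erase hx))
  calc ‖eH H z‖ ≤ R * max 1 (R / δ) ^ (B.erase 0).card := by
        rw [hprod, ← Finset.prod_const]
        exact mul_le_mul hzR (Finset.prod_le_prod (fun _ _ => norm_nonneg _) hfactor)
          (Finset.prod_nonneg fun _ _ => norm_nonneg _) hR
    _ ≤ R * max 1 (R / δ) ^ N := by gcongr; exact le_max_left _ _

end Exponential

section PeriodDomain

variable {K : Type*} [NormedField K]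

theorem supNorm_eq_norm {m : ℕ} (ω : Fin m → K) : supNorm ω = ‖ω‖ := by
  rcases isEmpty_or_nonempty (Fin m) with h | h
  · simp [supNorm, Subsingleton.elim ω 0]
  · exact (IsGreatest.pi_norm ω).csSup_eq

variable {Finf : Subfield K} {m : ℕ}

theorem norm_mul_hOm_le (ω : Fin m → K) {ℓ : Fin m → K} (hℓ : Unimodular Finf ℓ) :
    ‖ω‖ * hOm Finf ω ≤ ‖∑ i, ℓ i * ω i‖ := by
  rw [hOm, supNorm_eq_norm]
  rcases eq_or_ne ‖ω‖ 0 with h | h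
  · simp [h]
  rw [← mul_assoc, mul_inv_cancel₀ h, one_mul]
  exact csInf_le ⟨0, by rintro _ ⟨_, _, rfl⟩; exact norm_nonneg _⟩ ⟨ℓ, hℓ, rfl⟩

theorem norm_mul_hOm_le_norm_apply (ω : Fin m → K) (i : Fin m) : ‖ω‖ * hOm Finf ω ≤ ‖ω i‖ := by
  classical
  have hℓ : Unimodular Finf (Pi.single i 1) := by
    refine ⟨fun j => ?_, by rw [supNorm_eq_norm, Pi.norm_single, norm_one]⟩
    rcases eq_or_ne j i with rfl | hj
    · simp
    · simp [hj]
  simpa [Pi.single_apply] using norm_mul_hOm_le ω hℓ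

/-- Normalising `v` by the inverse of a largest entry makes it unimodular. -/
theorem norm_mul_norm_mul_hOm_le (ω : Fin m → K) {v : Fin m → K} (hv : ∀ i, v i ∈ Finf) :
    ‖v‖ * (‖ω‖ * hOm Finf ω) ≤ ‖pairHom ω v‖ := by
  rcases eq_or_ne v 0 with rfl | hv0
  · simp [hOm]
  obtain ⟨j, -⟩ := Function.ne_iff.mp hv0
  have : Nonempty (Fin m) := ⟨j⟩
  obtain ⟨⟨i, hi : ‖v i‖ = ‖v‖⟩, -⟩ := IsGreatest.pi_norm v
  have hℓ : Unimodular Finf ((v i)⁻¹ • v) :=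
    ⟨fun j => mul_mem (inv_mem (hv i)) (hv j), by
      rw [supNorm_eq_norm, norm_smul, norm_inv, hi, inv_mul_cancel₀ (norm_ne_zero_iff.mpr hv0)]⟩
  have h := norm_mul_hOm_le ω hℓ
  simp only [Pi.smul_apply, smul_eq_mul, mul_assoc, ← Finset.mul_sum, norm_mul, norm_inv, hi] at h
  calc ‖v‖ * (‖ω‖ * hOm Finf ω) ≤ ‖v‖ * (‖v‖⁻¹ * ‖pairHom ω v‖) :=
        mul_le_mul_of_nonneg_left h (norm_nonneg _)
    _ = ‖pairHom ω v‖ := by field_simp [norm_ne_zero_iff.mpr hv0]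

theorem norm_pairHom_le [IsUltrametricDist K] (ω v : Fin m → K) :
    ‖pairHom ω v‖ ≤ ‖v‖ * ‖ω‖ := by
  show ‖∑ i, v i * ω i‖ ≤ _
  refine IsUltrametricDist.norm_sum_le_of_forall_le_of_nonneg (by positivity) fun i _ => ?_
  rw [norm_mul]
  exact mul_le_mul (norm_le_pi_norm v i) (norm_le_pi_norm ω i) (norm_nonneg _) (norm_nonneg _)

theorem map_pairHom_subset_Fspan (ω : Fin m → K) {Λ : AddSubgroup (Fin m → K)}
    (hΛ : ∀ v ∈ Λ, ∀ i, v i ∈ Finf) : (Λ.map (pairHom ω) : Set K) ⊆ Fspan Finf ω := by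
  rintro _ ⟨v, hv, rfl⟩
  exact ⟨v, hΛ v hv, rfl⟩

variable {ξ : K} {q s n : ℕ} {ω : Fin (s + 1) → K}

theorem norm_le_of_mem_OmegaN (hq : 0 < q) (hω : ω ∈ OmegaN Finf ξ q s n) :
    ‖ω‖ ≤ q ^ n * ‖ξ‖ := by
  obtain ⟨⟨-, hlast⟩, hh⟩ := hω
  have h := (mul_le_mul_of_nonneg_left hh (norm_nonneg ω)).trans
    (norm_mul_hOm_le_norm_apply ω (Fin.last s))
  rw [hlast, inv_pow] at h
  rwa [← div_eq_mul_inv, div_le_iff₀ (by positivity), mul_comm] at h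

theorem norm_pairHom_le_of_mem_OmegaN [IsUltrametricDist K] (hq : 0 < q)
    (hω : ω ∈ OmegaN Finf ξ q s n) (v : Fin (s + 1) → K) :
    ‖pairHom ω v‖ ≤ ‖v‖ * (q ^ n * ‖ξ‖) :=
  (norm_pairHom_le ω v).trans
    (mul_le_mul_of_nonneg_left (norm_le_of_mem_OmegaN hq hω) (norm_nonneg v))

theorem div_mul_norm_le_norm_pairHom_of_mem_OmegaN (hω : ω ∈ OmegaN Finf ξ q s n)
    {v : Fin (s + 1) → K} (hv : ∀ i, v i ∈ Finf) : ‖ξ‖ / q ^ n * ‖v‖ ≤ ‖pairHom ω v‖ := by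
  obtain ⟨⟨-, hlast⟩, hh⟩ := hω
  have hξ : ‖ξ‖ ≤ ‖ω‖ := hlast ▸ norm_le_pi_norm ω (Fin.last s)
  calc ‖ξ‖ / q ^ n * ‖v‖ = ‖v‖ * (‖ξ‖ * (q : ℝ)⁻¹ ^ n) := by rw [inv_pow]; ring
    _ ≤ ‖v‖ * (‖ω‖ * hOm Finf ω) := by gcongr
    _ ≤ ‖pairHom ω v‖ := norm_mul_norm_mul_hOm_le ω hv

end PeriodDomain

theorem statement17_general
    (p k q : ℕ) (hp : p.Prime) (hqpk : q = p ^ k) (hk : 0 < k)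
    {K : Type*} [NormedField K] [IsUltrametricDist K]
    (t : K) (ht : ‖t‖ = (q : ℝ))
    (Fq : Subfield K) (hFq : (Fq : Set K) = {x : K | x ^ q = x})
    (F : Subfield K)
    (A : Subring K) (hA : A = Subring.closure ((Fq : Set K) ∪ {t}))
    (Finf : Subfield K) (hFinf : (Finf : Set K) = closure (F : Set K))
    (ξ : K) (hξ : ξ ≠ 0)
    (s : ℕ) (Λ' : AddSubgroup (Fin (s + 1) → K))
    (hΛ'F : ∀ lam ∈ Λ', ∀ i, lam i ∈ F)
    (hco1 : (Λ' ⊓ Avec A (s + 1)).relIndex Λ' ≠ 0)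
    (β : Fin (s + 1) → K) :
    ∀ n : ℕ, 1 ≤ n → ∃ cn : ℝ, 0 < cn ∧ ∀ ω' ∈ OmegaN Finf ξ q s n,
      ‖eH (Λ'.map (pairHom ω')) (pairHom ω' β)‖ < cn ∧
      ∀ ω₁ : K, cn ≤ Metric.infDist ω₁ (Fspan Finf ω') →
        cn ≤ ‖eH (Λ'.map (pairHom ω')) ω₁‖ ∧
        ‖eH (Λ'.map (pairHom ω')) (pairHom ω' β) * (eH (Λ'.map (pairHom ω')) ω₁)⁻¹‖ < 1 := by
  intro n _
  have hq : 1 < q := hqpk ▸ Nat.one_lt_pow hk.ne' hp.one_lt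
  have hΛFinf : ∀ v ∈ Λ', ∀ i, v i ∈ Finf := fun v hv i => by
    rw [← SetLike.mem_coe, hFinf]
    exact subset_closure (hΛ'F v hv i)
  have hΛ : ∀ M : ℝ, {v | v ∈ Λ' ∧ ‖v‖ ≤ M}.Finite := by
    subst hA
    exact finite_setOf_mem_norm_le_of_relIndex_ne_zero (finite_setOf_mem_Avec_norm_le
      (finite_setOf_mem_closure_norm_le hq hFq (by rw [ht]; exact_mod_cast hq))) hco1
  obtain ⟨m, hm0, hm⟩ := exists_pos_le_norm_of_finite (hΛ 1)
  set a : ℝ := ‖ξ‖ / q ^ n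
  have ha : 0 < a := by positivity
  set R : ℝ := ‖β‖ * (q ^ n * ‖ξ‖)
  set cn := R * max 1 (R / (a * m)) ^ {v | v ∈ Λ' ∧ ‖v‖ ≤ R / a}.ncard + 1
  have hcn : 0 < cn := by positivity
  refine ⟨cn, hcn, fun ω hω => ?_⟩
  have hφ : ∀ v ∈ Λ', a * ‖v‖ ≤ ‖pairHom ω v‖ := fun v hv =>
    div_mul_norm_le_norm_pairHom_of_mem_OmegaN hω (hΛFinf v hv)
  have hH := stronglyDiscrete_map hΛ ha hφ
  have hupper : ‖eH (Λ'.map (pairHom ω)) (pairHom ω β)‖ < cn :=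
    (hH.norm_eH_le (by positivity) (mul_le_norm_of_mem_map ha.le hφ hm)
      (norm_pairHom_le_of_mem_OmegaN (by omega) hω β)
      (ncard_map_ball_le hΛ ha hφ R)).trans_lt (lt_add_one _)
  refine ⟨hupper, fun ω₁ hω₁ => ?_⟩
  have hlower := hH.le_norm_eH_of_le_infDist (map_pairHom_subset_Fspan ω hΛFinf) hω₁
  refine ⟨hlower, ?_⟩
  rw [norm_mul, norm_inv, ← div_eq_mul_inv, div_lt_one (hcn.trans_le hlower)]
  exact hupper.trans_le hlower

/-- (From the proof of Lemma 5.6(b).)  Let `β ∈ F^{r−1}` be a row vector.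
For every `n ≥ 1` there is a constant `c_n > 0` such that for every `ω' ∈ Ω^{r−1}_n` one
has `|e_{Λ'ω'}(βω')| < c_n`, and for every `ω₁` with `d(ω₁, F_∞^{r−1}ω') ≥ c_n` one has
`|e_{Λ'ω'}(ω₁)| ≥ c_n > |e_{Λ'ω'}(βω')|`, hence `|e_{Λ'ω'}(βω')·u_{ω'}(ω₁)| < 1`. -/
theorem statement17
    (p k q : ℕ) (hp : p.Prime) (hqpk : q = p ^ k) (hk : 0 < k)
    {K : Type*} [NormedField K] [CompleteSpace K] [IsAlgClosed K] [IsUltrametricDist K]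
    [CharP K p]
    (t : K) (ht : ‖t‖ = (q : ℝ))
    (Fq : Subfield K) (hFq : (Fq : Set K) = {x : K | x ^ q = x})
    (F : Subfield K) (hF : F = Subfield.closure ((Fq : Set K) ∪ {t}))
    (A : Subring K) (hA : A = Subring.closure ((Fq : Set K) ∪ {t}))
    (Finf : Subfield K) (hFinf : (Finf : Set K) = closure (F : Set K))
    (ξ : K) (hξ : ξ ≠ 0)
    (s : ℕ) (Λ' : AddSubgroup (Fin (s + 1) → K))
    (hΛ'F : ∀ lam ∈ Λ', ∀ i, lam i ∈ F)
    (hco1 : (Λ' ⊓ Avec A (s + 1)).relIndex Λ' ≠ 0)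
    (hco2 : (Λ' ⊓ Avec A (s + 1)).relIndex (Avec A (s + 1)) ≠ 0)
    (β : Fin (s + 1) → K) (hβ : ∀ i, β i ∈ F) :
    ∀ n : ℕ, 1 ≤ n → ∃ cn : ℝ, 0 < cn ∧ ∀ ω' ∈ OmegaN Finf ξ q s n,
      ‖eH (Λ'.map (pairHom ω')) (pairHom ω' β)‖ < cn ∧
      ∀ ω₁ : K, cn ≤ Metric.infDist ω₁ (Fspan Finf ω') →
        cn ≤ ‖eH (Λ'.map (pairHom ω')) ω₁‖ ∧
        ‖eH (Λ'.map (pairHom ω')) (pairHom ω' β) * (eH (Λ'.map (pairHom ω')) ω₁)⁻¹‖ < 1 :=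
  statement17_general p k q hp hqpk hk t ht Fq hFq F A hA Finf hFinf ξ hξ s Λ' hΛ'F hco1 β

end Paper
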